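/- Let T be a finite connected graph with positive diameter Δ, and H a graph covered by a family 𝒴 of connected subgraphs each containing all connected subgraphs of H of diameter less than Δ + 2. Then Hom(T, H) = ⋃_{Y ∈ 𝒴} Hom(T, Y) as posets, i.e., every multi-homomorphism from T to H factors through some connected subgraph of H of diameter less than Δ + 2. -/

import Mathlib

/-!
The image `⋃ x, η x` of `η` is the required vertex set. Points of `η` at adjacent vertices of `T`
are adjacent in `H`, so a walk `x = t₀, …, tₙ = y` in `T` lifts to a walk of the same length from
any `a ∈ η x` to any `b ∈ η y` through arbitrary points of the `η tᵢ`. This needs `n > 0`; when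
`x = y`, a step to a neighbour and back gives a walk of length `2 ≤ Δ + 1`.
-/

/-- A graph: a symmetric relation on a vertex type (loops allowed). -/
structure SymRelGraph (V : Type*) where
  adj : V → V → Prop
  symm : ∀ {x y : V}, adj x y → adj y x

variable {V W U : Type*}

/-- `f` is a graph homomorphism from `G` to `H`. -/
def IsGraphHom (G : SymRelGraph V) (H : SymRelGraph W) (f : V → W) : Prop :=
  ∀ {x y : V}, G.adj x y → H.adj (f x) (f y)

/-- The type of graph homomorphisms. -/
def GHom (G : SymRelGraph V) (H : SymRelGraph W) := {f : V → W // IsGraphHom G H f}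

def GHom.id (G : SymRelGraph V) : GHom G G := ⟨fun x => x, fun h => h⟩

def GHom.comp {G : SymRelGraph V} {H : SymRelGraph W} {K : SymRelGraph U}
    (g : GHom H K) (f : GHom G H) : GHom G K :=
  ⟨fun x => g.1 (f.1 x), fun h => g.2 (f.2 h)⟩

/-- `η` is a multi-homomorphism from `G` to `H`. -/
def IsMultiHom (G : SymRelGraph V) (H : SymRelGraph W) (η : V → Set W) : Prop :=
  (∀ x, (η x).Nonempty) ∧
    ∀ {x y}, G.adj x y → ∀ a ∈ η x, ∀ b ∈ η y, H.adj a b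

/-- The Hom complex `Hom(G,H)`: the poset of multi-homomorphisms. -/
def MultiHom (G : SymRelGraph V) (H : SymRelGraph W) := {η : V → Set W // IsMultiHom G H η}

instance (G : SymRelGraph V) (H : SymRelGraph W) : PartialOrder (MultiHom G H) :=
  Subtype.partialOrder _

/-- A graph homomorphism regarded as a multi-homomorphism (pointwise singletons). -/
def GHom.toMulti {G : SymRelGraph V} {H : SymRelGraph W} (f : GHom G H) : MultiHom G H :=
  ⟨fun x => {f.1 x}, fun x => ⟨f.1 x, rfl⟩, by
    intro x y h a ha b hb
    rw [Set.mem_singleton_iff] at ha hb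
    subst ha; subst hb
    exact f.2 h⟩

/-- Two homomorphisms are ×-homotopic iff they lie in the same connected
component of the poset `Hom(G,H)`. -/
def XHomotopic {G : SymRelGraph V} {H : SymRelGraph W} (f g : GHom G H) : Prop :=
  Relation.ReflTransGen (fun η η' : MultiHom G H => η ≤ η' ∨ η' ≤ η)
    f.toMulti g.toMulti

/-- A walk of length `n` in `H` staying inside the vertex set `S`. -/
def WalkIn (H : SymRelGraph W) (S : Set W) (φ : ℕ → W) (n : ℕ) : Prop :=
  (∀ i ≤ n, φ i ∈ S) ∧ ∀ i < n, H.adj (φ i) (φ (i + 1))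

theorem IsMultiHom.exists_walkIn_iUnion {G : SymRelGraph V} {H : SymRelGraph W} {η : V → Set W}
    (hη : IsMultiHom G H η) {φ : ℕ → V} {n : ℕ} (hn : 0 < n)
    (hφ : ∀ i < n, G.adj (φ i) (φ (i + 1))) {a b : W} (ha : a ∈ η (φ 0)) (hb : b ∈ η (φ n)) :
    ∃ ψ : ℕ → W, WalkIn H (⋃ x, η x) ψ n ∧ ψ 0 = a ∧ ψ n = b := by
  classical
  choose c hc using hη.1
  let ψ : ℕ → W := fun i => if i = 0 then a else if i = n then b else c (φ i)
  have hψ : ∀ i ≤ n, ψ i ∈ η (φ i) := by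
    intro i hi
    by_cases h0 : i = 0
    · subst h0; simpa [ψ] using ha
    by_cases hn' : i = n
    · subst hn'; simpa [ψ, h0] using hb
    simpa [ψ, h0, hn'] using hc (φ i)
  refine ⟨ψ, ⟨fun i hi => Set.mem_iUnion.2 ⟨φ i, hψ i hi⟩, fun i hi => ?_⟩, by simp [ψ], ?_⟩
  · exact hη.2 (hφ i hi) _ (hψ i hi.le) _ (hψ (i + 1) hi)
  · simp [ψ, hn.ne']

theorem exists_walk_pos_length_le (T : SymRelGraph V) (Δ : ℕ) (hpos : ∃ x y : V, x ≠ y)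
    (hconn : ∀ x y : V, ∃ n ≤ Δ, ∃ φ : ℕ → V,
      φ 0 = x ∧ φ n = y ∧ ∀ i < n, T.adj (φ i) (φ (i + 1)))
    (x y : V) : ∃ n, 0 < n ∧ n ≤ Δ + 1 ∧ ∃ φ : ℕ → V,
      φ 0 = x ∧ φ n = y ∧ ∀ i < n, T.adj (φ i) (φ (i + 1)) := by
  by_cases hxy : x = y
  · subst hxy
    have : Nontrivial V := ⟨hpos⟩
    obtain ⟨z, hzx⟩ := exists_ne x
    obtain ⟨m, hmΔ, φ, hφ0, hφm, hφ⟩ := hconn x z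
    have hm : 0 < m := Nat.pos_of_ne_zero fun h => hzx (by rw [← hφm, h, hφ0])
    have hadj : T.adj x (φ 1) := hφ0 ▸ hφ 0 hm
    -- `0 < m ≤ Δ` leaves room for the closed walk `x, φ 1, x` of length `2 ≤ Δ + 1`
    refine ⟨2, two_pos, by omega, fun i => if i = 1 then φ 1 else x, rfl, rfl, ?_⟩
    intro i hi
    interval_cases i
    · simpa using hadj
    · simpa using T.symm hadj
  · obtain ⟨n, hnΔ, φ, hφ0, hφn, hφ⟩ := hconn x y
    have hn : 0 < n := Nat.pos_of_ne_zero fun h => hxy (by rw [← hφ0, ← hφn, h])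
    exact ⟨n, hn, by omega, φ, hφ0, hφn, hφ⟩

theorem stmt_13_general (T : SymRelGraph V) (H : SymRelGraph W)
    (Δ : ℕ)
    (hpos : ∃ x y : V, x ≠ y)
    (hconn : ∀ x y : V, ∃ n ≤ Δ, ∃ φ : ℕ → V,
      φ 0 = x ∧ φ n = y ∧ ∀ i < n, T.adj (φ i) (φ (i + 1)))
    (η : MultiHom T H) :
    ∃ S : Set W, S.Nonempty ∧ (∀ x : V, η.1 x ⊆ S) ∧
      ∀ a ∈ S, ∀ b ∈ S, ∃ n ≤ Δ + 1, ∃ φ : ℕ → W,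
        WalkIn H S φ n ∧ φ 0 = a ∧ φ n = b := by
  have hη := η.2
  refine ⟨⋃ x, η.1 x, ?_, Set.subset_iUnion η.1, ?_⟩
  · obtain ⟨x, -⟩ := hpos
    exact (hη.1 x).mono (Set.subset_iUnion η.1 x)
  · intro a ha b hb
    obtain ⟨x, hx⟩ := Set.mem_iUnion.1 ha
    obtain ⟨y, hy⟩ := Set.mem_iUnion.1 hb
    obtain ⟨n, hn, hnΔ, φ, rfl, rfl, hφ⟩ := exists_walk_pos_length_le T Δ hpos hconn x y
    exact ⟨n, hnΔ, hη.exists_walkIn_iUnion hn hφ hx hy⟩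

/-- Let `T` be a finite connected graph of positive diameter at most `Δ`.
Then every multi-homomorphism `η : T → H` factors through a connected
subgraph of `H` of diameter less than `Δ + 2`: its image is contained in a
nonempty vertex set `S` any two of whose vertices are joined inside `S` by a
walk of length at most `Δ + 1`. -/
theorem stmt_13 (T : SymRelGraph V) [Fintype V] (H : SymRelGraph W)
    (Δ : ℕ) (hΔ : 0 < Δ)
    (hpos : ∃ x y : V, x ≠ y)
    (hconn : ∀ x y : V, ∃ n ≤ Δ, ∃ φ : ℕ → V,
      φ 0 = x ∧ φ n = y ∧ ∀ i < n, T.adj (φ i) (φ (i + 1)))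
    (η : MultiHom T H) :
    ∃ S : Set W, S.Nonempty ∧ (∀ x : V, η.1 x ⊆ S) ∧
      ∀ a ∈ S, ∀ b ∈ S, ∃ n ≤ Δ + 1, ∃ φ : ℕ → W,
        WalkIn H S φ n ∧ φ 0 = a ∧ φ n = b :=
  stmt_13_general T H Δ hpos hconn η
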